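/- (Interpolant combination lemma, right-empty case) With notation as before, suppose neither l nor l* occurs in the consequent side, i.e., p = r = 0. If I_1 and I_2 satisfy ⋀{A_1,...,A_m} ∧ ⋀E_1 → I_1, I_1 → ⋁E_2, ⋀{B_1,...,B_o} ∧ ⋀E_1 → I_2, and I_2 → ⋁E_2 (all valid), then I = I_1 ∨ I_2 satisfies: (A_1∨l) ∧...∧ (A_m∨l) ∧ (B_1∨l*) ∧...∧ (B_o∨l*) ∧ ⋀E_1 → I is valid and I → ⋁E_2 is valid. -/

import Mathlib

/-- Propositional formulas over variables indexed by naturals. -/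
inductive PropForm where
  | var : Nat → PropForm
  | fls : PropForm
  | tru : PropForm
  | neg : PropForm → PropForm
  | conj : PropForm → PropForm → PropForm
  | disj : PropForm → PropForm → PropForm
deriving DecidableEq

/-- Classical Boolean evaluation of a formula under a valuation. -/
def PropForm.eval (v : Nat → Bool) : PropForm → Bool
  | .var n => v n
  | .fls => false
  | .tru => true
  | .neg A => !(A.eval v)
  | .conj A B => A.eval v && B.eval v
  | .disj A B => A.eval v || B.eval v

/-- The propositional variables occurring in a formula. -/
def PropForm.vars : PropForm → Finset Nat
  | .var n => {n}
  | .fls => ∅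
  | .tru => ∅
  | .neg A => A.vars
  | .conj A B => A.vars ∪ B.vars
  | .disj A B => A.vars ∪ B.vars

/-- A formula is valid iff true under every valuation. -/
def PropForm.Valid (A : PropForm) : Prop := ∀ v : Nat → Bool, A.eval v = true

/-- Literals: a variable or its negation. -/
inductive Lit where
  | pos : Nat → Lit
  | neg : Nat → Lit
deriving DecidableEq

/-- The complement of a literal. -/
def Lit.compl : Lit → Lit
  | .pos n => .neg n
  | .neg n => .pos n

/-- The variable of a literal. -/
def Lit.var : Lit → Nat
  | .pos n => n
  | .neg n => n

/-- Evaluation of a literal. -/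
def Lit.eval (v : Nat → Bool) : Lit → Bool
  | .pos n => v n
  | .neg n => !(v n)

/-- A literal as a formula. -/
def Lit.toForm : Lit → PropForm
  | .pos n => .var n
  | .neg n => .neg (.var n)

/-- A clause (finite set of literals read disjunctively) is satisfied by `v`. -/
def clauseSat (v : Nat → Bool) (C : Finset Lit) : Prop := ∃ l ∈ C, l.eval v = true

/-- A conjunction of literals (finite set read conjunctively) is satisfied by `v`. -/
def cubeSat (v : Nat → Bool) (C : Finset Lit) : Prop := ∀ l ∈ C, l.eval v = true

/-! Under a valuation `v`, either `l` is false, and then the clauses `A_i ∨ l` reduce to `A_i`,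
so `I₁` holds; or `l*` is false, and then the clauses `B_j ∨ l*` reduce to `B_j`, so `I₂` holds.
The right-hand implication holds disjunct by disjunct. -/

@[simp]
theorem Lit.eval_compl (v : Nat → Bool) (l : Lit) : l.compl.eval v = !l.eval v := by
  cases l <;> simp [Lit.compl, Lit.eval]

@[simp]
theorem PropForm.eval_disj (v : Nat → Bool) (A B : PropForm) :
    (PropForm.disj A B).eval v = (A.eval v || B.eval v) :=
  rfl

theorem clauseSat.of_insert {v : Nat → Bool} {l : Lit} {C : Finset Lit}
    (h : clauseSat v (insert l C)) (hl : l.eval v = false) : clauseSat v C := by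
  obtain ⟨x, hx, hxv⟩ := h
  rcases Finset.mem_insert.mp hx with rfl | hxC
  · simp [hl] at hxv
  · exact ⟨x, hxC, hxv⟩

theorem stmt6_general (l : Lit) (As Bs : List (Finset Lit))
    (E₁ E₂ : Finset (Finset Lit)) (I₁ I₂ : PropForm)
    (hI₁l : ∀ v : Nat → Bool,
      ((∀ A ∈ As, clauseSat v A) ∧ (∀ C ∈ E₁, clauseSat v C)) → I₁.eval v = true)
    (hI₁r : ∀ v : Nat → Bool, I₁.eval v = true → ∃ C ∈ E₂, cubeSat v C)
    (hI₂l : ∀ v : Nat → Bool,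
      ((∀ B ∈ Bs, clauseSat v B) ∧ (∀ C ∈ E₁, clauseSat v C)) → I₂.eval v = true)
    (hI₂r : ∀ v : Nat → Bool, I₂.eval v = true → ∃ C ∈ E₂, cubeSat v C) :
    (∀ v : Nat → Bool,
      ((∀ A ∈ As, clauseSat v (insert l A)) ∧
       (∀ B ∈ Bs, clauseSat v (insert l.compl B)) ∧
       (∀ C ∈ E₁, clauseSat v C)) →
      (PropForm.disj I₁ I₂).eval v = true) ∧
    (∀ v : Nat → Bool, (PropForm.disj I₁ I₂).eval v = true →
      ∃ C ∈ E₂, cubeSat v C) := by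
  refine ⟨fun v ⟨hA, hB, hE⟩ => ?_, fun v hv => ?_⟩
  · rw [PropForm.eval_disj, Bool.or_eq_true]
    cases hl : l.eval v
    · exact Or.inl (hI₁l v ⟨fun A hAmem => (hA A hAmem).of_insert hl, hE⟩)
    · have hlc : l.compl.eval v = false := by simp [hl]
      exact Or.inr (hI₂l v ⟨fun B hBmem => (hB B hBmem).of_insert hlc, hE⟩)
  · rw [PropForm.eval_disj, Bool.or_eq_true] at hv
    exact hv.elim (hI₁r v) (hI₂r v)

theorem stmt6 (l : Lit) (As Bs : List (Finset Lit))
    (E₁ E₂ : Finset (Finset Lit)) (I₁ I₂ : PropForm)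
    (hAs : ∀ A ∈ As, l ∉ A ∧ l.compl ∉ A)
    (hBs : ∀ B ∈ Bs, l ∉ B ∧ l.compl ∉ B)
    (hE₁ : ∀ C ∈ E₁, l ∉ C ∧ l.compl ∉ C)
    (hE₂ : ∀ C ∈ E₂, l ∉ C ∧ l.compl ∉ C)
    (hI₁l : ∀ v : Nat → Bool,
      ((∀ A ∈ As, clauseSat v A) ∧ (∀ C ∈ E₁, clauseSat v C)) → I₁.eval v = true)
    (hI₁r : ∀ v : Nat → Bool, I₁.eval v = true → ∃ C ∈ E₂, cubeSat v C)
    (hI₂l : ∀ v : Nat → Bool,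
      ((∀ B ∈ Bs, clauseSat v B) ∧ (∀ C ∈ E₁, clauseSat v C)) → I₂.eval v = true)
    (hI₂r : ∀ v : Nat → Bool, I₂.eval v = true → ∃ C ∈ E₂, cubeSat v C) :
    (∀ v : Nat → Bool,
      ((∀ A ∈ As, clauseSat v (insert l A)) ∧
       (∀ B ∈ Bs, clauseSat v (insert l.compl B)) ∧
       (∀ C ∈ E₁, clauseSat v C)) →
      (PropForm.disj I₁ I₂).eval v = true) ∧
    (∀ v : Nat → Bool, (PropForm.disj I₁ I₂).eval v = true →
      ∃ C ∈ E₂, cubeSat v C) :=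
  stmt6_general l As Bs E₁ E₂ I₁ I₂ hI₁l hI₁r hI₂l hI₂r
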